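/- arXiv:1002.0036 — 6 statements merged into one kernel-verified Lean document; each statement's English description precedes it below -/
import Mathlib

section
/- First Fuzzy Bolzano–Cauchy Theorem: Let a < b be real numbers and r > 0. If f : ℝ → ℝ is r-continuous inside the closed interval [a, b], f(a) < 0 and f(b) > 0, then there exists a point c ∈ [a, b] such that |f(c)| < r. -/
/-- A function `f : ℝ → ℝ` is `r`-continuous inside a set `X ⊆ ℝ` if for every
point `p ∈ X` and every `ε > 0` there exists `δ > 0` such that every `x ∈ X`
with `|x − p| < δ` satisfies `|f x − f p| < r + ε`. -/
def RContinuousInside (r : ℝ) (f : ℝ → ℝ) (X : Set ℝ) : Prop :=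
  ∀ p ∈ X, ∀ ε > 0, ∃ δ > 0, ∀ x ∈ X, |x - p| < δ → |f x - f p| < r + ε

/-- First Fuzzy Bolzano–Cauchy Theorem. -/
theorem first_fuzzy_bolzano_cauchy (a b r : ℝ) (hab : a < b) (hr : 0 < r)
    (f : ℝ → ℝ) (hf : RContinuousInside r f (Set.Icc a b))
    (ha : f a < 0) (hb : 0 < f b) :
    ∃ c ∈ Set.Icc a b, |f c| < r := by
  by_contra hcon
  push_neg at hcon
  -- every point of [a,b] has f x ≤ -r or r ≤ f x
  have key : ∀ x ∈ Set.Icc a b, f x ≤ -r ∨ r ≤ f x := by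
    intro x hx
    rcases le_abs.mp (hcon x hx) with h | h
    · exact Or.inr h
    · exact Or.inl (by linarith)
  set S : Set ℝ := {x | x ∈ Set.Icc a b ∧ f x ≤ -r} with hS
  have haS : a ∈ S := by
    refine ⟨⟨le_refl a, le_of_lt hab⟩, ?_⟩
    rcases key a ⟨le_refl a, le_of_lt hab⟩ with h | h
    · exact h
    · linarith
  have hne : S.Nonempty := ⟨a, haS⟩
  have hbdd : BddAbove S := ⟨b, fun x hx => hx.1.2⟩
  set c := sSup S with hc
  have hac : a ≤ c := le_csSup hbdd haS
  have hcb : c ≤ b := csSup_le hne fun x hx => hx.1.2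
  have hcI : c ∈ Set.Icc a b := ⟨hac, hcb⟩
  obtain ⟨δ, hδ, hδ'⟩ := hf c hcI (r/2) (by linarith)
  rcases key c hcI with hneg | hpos
  · -- f c ≤ -r : go slightly right of c
    have hcb' : c < b := lt_of_le_of_ne hcb (by intro h; rw [h] at hneg; linarith)
    set x := min b (c + δ/2) with hx
    have hxc : c < x := lt_min hcb' (by linarith)
    have hxI : x ∈ Set.Icc a b := ⟨le_trans hac (le_of_lt hxc), min_le_left _ _⟩
    have hxd : |x - c| < δ := by
      rw [abs_of_pos (by linarith)]
      have : x ≤ c + δ/2 := min_le_right _ _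
      linarith
    have hxS : x ∉ S := fun h => absurd (le_csSup hbdd h) (not_le.mpr hxc)
    have hfx : r ≤ f x := by
      rcases key x hxI with h | h
      · exact absurd ⟨hxI, h⟩ hxS
      · exact h
    have := hδ' x hxI hxd
    rw [abs_sub_lt_iff] at this
    linarith [this.1]
  · -- r ≤ f c : take x ∈ S close to c from the left
    obtain ⟨x, hxS, hxgt⟩ := exists_lt_of_lt_csSup hne (show c - δ < c by linarith)
    have hxle : x ≤ c := le_csSup hbdd hxS
    have hxd : |x - c| < δ := by
      rw [abs_sub_comm, abs_of_nonneg (by linarith)]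
      linarith
    have := hδ' x hxS.1 hxd
    rw [abs_sub_lt_iff] at this
    have := this.2
    have hfx : f x ≤ -r := hxS.2
    linarith
end

section
/- Fuzzy Intermediate Value Theorem: Let a < b be real numbers and r > 0. If f : ℝ → ℝ is r-continuous inside the closed interval [a, b], then for every real number l with min(f(a), f(b)) ≤ l ≤ max(f(a), f(b)) there exists a point c ∈ [a, b] such that |f(c) − l| < r. -/
lemma fuzzy_ivt_aux (a b r : ℝ) (hab : a < b) (hr : 0 < r)
    (f : ℝ → ℝ) (hf : RContinuousInside r f (Set.Icc a b))
    (l : ℝ) (h1 : f a ≤ l) (h2 : l ≤ f b) :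
    ∃ c ∈ Set.Icc a b, |f c - l| < r := by
  set S : Set ℝ := {x | x ∈ Set.Icc a b ∧ f x ≤ l} with hS
  have hSa : a ∈ S := ⟨⟨le_refl a, hab.le⟩, h1⟩
  have hbdd : BddAbove S := ⟨b, fun x hx => hx.1.2⟩
  set c := sSup S with hc
  have hca : a ≤ c := le_csSup hbdd hSa
  have hcb : c ≤ b := csSup_le ⟨a, hSa⟩ (fun x hx => hx.1.2)
  have hcmem : c ∈ Set.Icc a b := ⟨hca, hcb⟩
  by_cases hgood : |f c - l| < r
  · exact ⟨c, hcmem, hgood⟩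
  push_neg at hgood
  obtain ⟨δ, hδ, hδf⟩ := hf c hcmem (r / 2) (by positivity)
  by_cases hfc : f c ≤ l
  · -- then f c ≤ l - r, and c < b
    have hfcr : f c ≤ l - r := by
      have : |f c - l| = l - f c := by
        rw [abs_of_nonpos (by linarith)]; ring
      linarith [this ▸ hgood]
    have hcb' : c < b := by
      rcases lt_or_eq_of_le hcb with h | h
      · exact h
      · exfalso; rw [h] at hfcr; linarith
    set x := min b (c + δ / 2) with hx
    have hxc : c < x := lt_min hcb' (by linarith)
    have hxb : x ≤ b := min_le_left _ _
    have hxmem : x ∈ Set.Icc a b := ⟨le_trans hca hxc.le, hxb⟩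
    have hxd : |x - c| < δ := by
      rw [abs_of_pos (by linarith)]
      have : x ≤ c + δ / 2 := min_le_right _ _
      linarith
    have hxS : x ∉ S := fun h => absurd (le_csSup hbdd h) (not_le.mpr hxc)
    have hfx : l < f x := by
      by_contra h
      exact hxS ⟨hxmem, not_lt.mp h⟩
    have := hδf x hxmem hxd
    have hub : f x - f c < r + r / 2 := lt_of_abs_lt this
    refine ⟨x, hxmem, ?_⟩
    rw [abs_of_pos (by linarith)]
    linarith
  · -- f c ≥ l + r
    push_neg at hfc
    have hfcr : l + r ≤ f c := by
      have : |f c - l| = f c - l := abs_of_pos (by linarith)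
      linarith [this ▸ hgood]
    obtain ⟨x, hxS, hxlt⟩ := exists_lt_of_lt_csSup ⟨a, hSa⟩ (show c - δ < c by linarith)
    have hxc : x ≤ c := le_csSup hbdd hxS
    have hxd : |x - c| < δ := by
      rw [abs_of_nonpos (by linarith)]
      linarith
    have := hδf x hxS.1 hxd
    have hub : f c - f x < r + r / 2 := by
      have := neg_lt_of_abs_lt this; linarith
    refine ⟨x, hxS.1, ?_⟩
    have hfxl : f x ≤ l := hxS.2
    rw [abs_of_nonpos (by linarith)]
    linarith

/-- Fuzzy Intermediate Value Theorem. -/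
theorem fuzzy_intermediate_value (a b r : ℝ) (hab : a < b) (hr : 0 < r)
    (f : ℝ → ℝ) (hf : RContinuousInside r f (Set.Icc a b))
    (l : ℝ) (hl : min (f a) (f b) ≤ l ∧ l ≤ max (f a) (f b)) :
    ∃ c ∈ Set.Icc a b, |f c - l| < r := by
  obtain ⟨hl1, hl2⟩ := hl
  rcases le_total (f a) (f b) with h | h
  · exact fuzzy_ivt_aux a b r hab hr f hf l
      (by rwa [min_eq_left h] at hl1) (by rwa [max_eq_right h] at hl2)
  · have hf' : RContinuousInside r (fun x => -f x) (Set.Icc a b) := by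
      intro p hp ε hε
      obtain ⟨δ, hδ, hδf⟩ := hf p hp ε hε
      exact ⟨δ, hδ, fun x hx hxd => by
        have := hδf x hx hxd
        have h2 : (fun x => -f x) x - (fun x => -f x) p = -(f x - f p) := by simp; ring
        rw [h2, abs_neg]; exact this⟩
    obtain ⟨c, hcmem, hc⟩ := fuzzy_ivt_aux a b r hab hr (fun x => -f x) hf' (-l)
      (by rw [max_eq_left h] at hl2; linarith)
      (by rw [min_eq_right h] at hl1; linarith)
    refine ⟨c, hcmem, ?_⟩
    have : |f c - l| = |-f c - -l| := by rw [show -f c - -l = -(f c - l) by ring, abs_neg]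
    rw [this]; exact hc
end

section
/- First Discrete Bolzano–Cauchy Theorem: Let q, r ≥ 0. Let X ⊆ ℝ be discrete in ℝ such that any two adjacent points of X are at distance at most q, and let Y ⊆ ℝ be discrete in ℝ with 0 ∈ Y such that any two adjacent points of Y are at distance at least r. Let f : ℝ → ℝ satisfy f(X) ⊆ Y and be (q, r)-continuous inside X. If a, b ∈ X, a < b, f(a) < 0 and f(b) > 0, then there exists c ∈ X with a < c < b and f(c) = 0. -/
/-- A set `X ⊆ ℝ` is discrete in `ℝ` if no sequence of pairwise distinct points
of `X` converges to a real number. -/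
def DiscreteInR (X : Set ℝ) : Prop :=
  ¬ ∃ (a : ℕ → ℝ) (c : ℝ), (∀ n, a n ∈ X) ∧ Function.Injective a ∧
      Filter.Tendsto a Filter.atTop (nhds c)

/-- Two points `u < v` of `X` are adjacent in `X` if no point of `X` lies
strictly between them. -/
def Adjacent (X : Set ℝ) (u v : ℝ) : Prop :=
  u ∈ X ∧ v ∈ X ∧ u < v ∧ ∀ z ∈ X, ¬ (u < z ∧ z < v)

/-- A function `f : ℝ → ℝ` is `(q, r)`-continuous inside a set `X ⊆ ℝ`. -/
def QRContinuousInside (q r : ℝ) (f : ℝ → ℝ) (X : Set ℝ) : Prop :=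
  ∀ p ∈ X, ∀ ε > 0, ∃ δ > 0, ∀ x ∈ X, |x - p| < q + δ → |f x - f p| < r + ε

lemma discrete_finite_inter {X : Set ℝ} (hX : DiscreteInR X) (a b : ℝ) :
    (X ∩ Set.Icc a b).Finite := by
  by_contra h
  have hinf : (X ∩ Set.Icc a b).Infinite := h
  let e := hinf.natEmbedding
  have hbdd : Bornology.IsBounded (X ∩ Set.Icc a b) :=
    (Metric.isBounded_Icc a b).subset Set.inter_subset_right
  obtain ⟨c, -, φ, hφ, htend⟩ :=
    tendsto_subseq_of_bounded hbdd (fun n => (e n).2)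
  refine hX ⟨fun n => ((e (φ n) : ℝ)), c,
    fun n => ((e (φ n)).2).1, ?_, htend⟩
  intro m n hmn
  exact hφ.injective (e.injective (Subtype.ext hmn))

/-- First Discrete Bolzano–Cauchy Theorem. -/
theorem first_discrete_bolzano_cauchy (q r : ℝ) (hq : 0 ≤ q) (hr : 0 ≤ r)
    (X Y : Set ℝ) (hX : DiscreteInR X) (hY : DiscreteInR Y)
    (hXadj : ∀ u v : ℝ, Adjacent X u v → v - u ≤ q)
    (h0Y : (0 : ℝ) ∈ Y)
    (hYadj : ∀ u v : ℝ, Adjacent Y u v → r ≤ v - u)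
    (f : ℝ → ℝ) (hfXY : ∀ x ∈ X, f x ∈ Y)
    (hf : QRContinuousInside q r f X)
    (a b : ℝ) (haX : a ∈ X) (hbX : b ∈ X) (hab : a < b)
    (hfa : f a < 0) (hfb : 0 < f b) :
    ∃ c ∈ X, a < c ∧ c < b ∧ f c = 0 := by
  classical
  have hSfin : (X ∩ Set.Icc a b).Finite := discrete_finite_inter hX a b
  set S := hSfin.toFinset with hS
  have memS : ∀ x : ℝ, x ∈ S ↔ x ∈ X ∧ a ≤ x ∧ x ≤ b := by
    intro x
    simp [hS, Set.Finite.mem_toFinset, Set.mem_inter_iff, Set.mem_Icc, and_assoc]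
  -- N : points of S with negative value
  set N := S.filter (fun x => f x < 0) with hN
  have haN : a ∈ N := by
    rw [hN, Finset.mem_filter, memS]
    exact ⟨⟨haX, le_refl a, hab.le⟩, hfa⟩
  have hNne : N.Nonempty := ⟨a, haN⟩
  set c0 := N.max' hNne with hc0
  have hc0N : c0 ∈ N := N.max'_mem hNne
  obtain ⟨hc0S, hfc0⟩ := Finset.mem_filter.mp hc0N
  obtain ⟨hc0X, hac0, hc0b'⟩ := (memS c0).mp hc0S
  have hc0b : c0 < b := by
    rcases lt_or_eq_of_le hc0b' with h | h
    · exact h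
    · exact absurd hfb (by rw [← h]; linarith)
  -- P : points of S strictly beyond c0
  set P := S.filter (fun x => c0 < x) with hP
  have hbP : b ∈ P := by
    rw [hP, Finset.mem_filter, memS]
    exact ⟨⟨hbX, hab.le, le_refl b⟩, hc0b⟩
  have hPne : P.Nonempty := ⟨b, hbP⟩
  set c1 := P.min' hPne with hc1
  have hc1P : c1 ∈ P := P.min'_mem hPne
  obtain ⟨hc1S, hc0c1⟩ := Finset.mem_filter.mp hc1P
  obtain ⟨hc1X, hac1, hc1b⟩ := (memS c1).mp hc1S
  -- c0 and c1 are adjacent in X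
  have hadj : Adjacent X c0 c1 := by
    refine ⟨hc0X, hc1X, hc0c1, fun z hzX ⟨hz1, hz2⟩ => ?_⟩
    have hzP : z ∈ P := by
      rw [hP, Finset.mem_filter, memS]
      exact ⟨⟨hzX, hac0.trans hz1.le, hz2.le.trans hc1b⟩, hz1⟩
    exact absurd (P.min'_le z hzP) (not_le.mpr hz2)
  have hgap : c1 - c0 ≤ q := hXadj _ _ hadj
  -- c1 has nonnegative value
  have hfc1nn : 0 ≤ f c1 := by
    by_contra h
    push_neg at h
    have : c1 ∈ N := Finset.mem_filter.mpr ⟨hc1S, h⟩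
    exact absurd (N.le_max' c1 this) (not_le.mpr hc0c1)
  -- continuity estimate
  have hcont : f c1 - f c0 ≤ r := by
    have habs : |f c1 - f c0| ≤ r := by
      refine le_of_forall_pos_lt_add (fun ε hε => ?_)
      obtain ⟨δ, hδ, hδ'⟩ := hf c0 hc0X ε hε
      refine hδ' c1 hc1X ?_
      rw [abs_of_pos (by linarith)]
      linarith
    calc f c1 - f c0 ≤ |f c1 - f c0| := le_abs_self _
      _ ≤ r := habs
  -- f c1 = 0
  have hfc1 : f c1 = 0 := by
    by_contra h
    have hpos : 0 < f c1 := lt_of_le_of_ne hfc1nn (Ne.symm h)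
    have hVfin : (Y ∩ Set.Icc 0 (f c1)).Finite := discrete_finite_inter hY 0 (f c1)
    set V := hVfin.toFinset.filter (fun y => 0 < y) with hV
    have memV : ∀ y : ℝ, y ∈ V ↔ y ∈ Y ∧ 0 < y ∧ y ≤ f c1 := by
      intro y
      rw [hV, Finset.mem_filter, Set.Finite.mem_toFinset, Set.mem_inter_iff, Set.mem_Icc]
      constructor
      · rintro ⟨⟨h1, h2, h3⟩, h4⟩; exact ⟨h1, h4, h3⟩
      · rintro ⟨h1, h2, h3⟩; exact ⟨⟨h1, h2.le, h3⟩, h2⟩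
    have hfc1V : f c1 ∈ V := (memV _).mpr ⟨hfXY c1 hc1X, hpos, le_refl _⟩
    have hVne : V.Nonempty := ⟨f c1, hfc1V⟩
    set v := V.min' hVne with hv
    obtain ⟨hvY, hvpos, hvle⟩ := (memV v).mp (V.min'_mem hVne)
    have hadjY : Adjacent Y 0 v := by
      refine ⟨h0Y, hvY, hvpos, fun z hzY ⟨hz1, hz2⟩ => ?_⟩
      have hzV : z ∈ V := (memV z).mpr ⟨hzY, hz1, hz2.le.trans hvle⟩
      exact absurd (V.min'_le z hzV) (not_le.mpr hz2)
    have hrv : r ≤ v - 0 := hYadj 0 v hadjY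
    linarith
  refine ⟨c1, hc1X, lt_of_le_of_lt hac0 hc0c1, ?_, hfc1⟩
  rcases lt_or_eq_of_le hc1b with h | h
  · exact h
  · exact absurd hfb (by rw [← h, hfc1]; exact lt_irrefl 0)
end

section
/- Let q, r ≥ 0, let C ⊆ ℝ be a q-connected set, and let f : ℝ → ℝ be (q, r)-continuous inside C. Then the image f(C) = {f(x) : x ∈ C} is an r-connected set. -/
/-- A set `C ⊆ ℝ` is `r`-disconnected if `C = A ∪ B` for nonempty `A, B` with
`dist(a, B) > r` for every `a ∈ A` and `dist(b, A) > r` for every `b ∈ B`. -/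
def RDisconnected (r : ℝ) (C : Set ℝ) : Prop :=
  ∃ A B : Set ℝ, A.Nonempty ∧ B.Nonempty ∧ C = A ∪ B ∧
    (∀ a ∈ A, r < Metric.infDist a B) ∧ (∀ b ∈ B, r < Metric.infDist b A)

/-- A set is `r`-connected if it is not `r`-disconnected. -/
def RConnected (r : ℝ) (C : Set ℝ) : Prop := ¬ RDisconnected r C

/-- The `(q, r)`-continuous image of a `q`-connected set is `r`-connected. -/
theorem rConnected_image (q r : ℝ) (hq : 0 ≤ q) (hr : 0 ≤ r)
    (C : Set ℝ) (hC : RConnected q C)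
    (f : ℝ → ℝ) (hf : QRContinuousInside q r f C) :
    RConnected r (f '' C) := by
  rintro ⟨A, B, hA, hB, hU, hAB, hBA⟩
  apply hC
  refine ⟨{x ∈ C | f x ∈ A}, {x ∈ C | f x ∈ B}, ?_, ?_, ?_, ?_, ?_⟩
  · obtain ⟨a, ha⟩ := hA
    have : a ∈ f '' C := hU ▸ Set.mem_union_left _ ha
    obtain ⟨x, hx, rfl⟩ := this
    exact ⟨x, hx, ha⟩
  · obtain ⟨b, hb⟩ := hB
    have : b ∈ f '' C := hU ▸ Set.mem_union_right _ hb
    obtain ⟨x, hx, rfl⟩ := this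
    exact ⟨x, hx, hb⟩
  · ext x
    constructor
    · intro hx
      have : f x ∈ A ∪ B := hU ▸ Set.mem_image_of_mem f hx
      rcases this with h | h
      · exact Or.inl ⟨hx, h⟩
      · exact Or.inr ⟨hx, h⟩
    · rintro (⟨h, _⟩ | ⟨h, _⟩) <;> exact h
  · rintro x ⟨hxC, hxA⟩
    by_contra hle
    push_neg at hle
    have hBne : ({x ∈ C | f x ∈ B} : Set ℝ).Nonempty := by
      obtain ⟨b, hb⟩ := hB
      have : b ∈ f '' C := hU ▸ Set.mem_union_right _ hb
      obtain ⟨y, hy, rfl⟩ := this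
      exact ⟨y, hy, hb⟩
    have hε : 0 < Metric.infDist (f x) B - r := sub_pos.mpr (hAB _ hxA)
    obtain ⟨δ, hδ, hδ'⟩ := hf x hxC _ hε
    have : Metric.infDist x {x ∈ C | f x ∈ B} < q + δ := lt_of_le_of_lt hle (by linarith)
    obtain ⟨y, hy, hyd⟩ := (Metric.infDist_lt_iff hBne).mp this
    have h1 : |f y - f x| < r + (Metric.infDist (f x) B - r) := by
      apply hδ' y hy.1
      rwa [Real.dist_eq, abs_sub_comm] at hyd
    have h2 : Metric.infDist (f x) B ≤ |f x - f y| := by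
      rw [← Real.dist_eq]
      exact Metric.infDist_le_dist_of_mem hy.2
    rw [abs_sub_comm] at h1
    linarith
  · rintro x ⟨hxC, hxB⟩
    by_contra hle
    push_neg at hle
    have hAne : ({x ∈ C | f x ∈ A} : Set ℝ).Nonempty := by
      obtain ⟨a, ha⟩ := hA
      have : a ∈ f '' C := hU ▸ Set.mem_union_left _ ha
      obtain ⟨y, hy, rfl⟩ := this
      exact ⟨y, hy, ha⟩
    have hε : 0 < Metric.infDist (f x) A - r := sub_pos.mpr (hBA _ hxB)
    obtain ⟨δ, hδ, hδ'⟩ := hf x hxC _ hε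
    have : Metric.infDist x {x ∈ C | f x ∈ A} < q + δ := lt_of_le_of_lt hle (by linarith)
    obtain ⟨y, hy, hyd⟩ := (Metric.infDist_lt_iff hAne).mp this
    have h1 : |f y - f x| < r + (Metric.infDist (f x) A - r) := by
      apply hδ' y hy.1
      rwa [Real.dist_eq, abs_sub_comm] at hyd
    have h2 : Metric.infDist (f x) A ≤ |f x - f y| := by
      rw [← Real.dist_eq]
      exact Metric.infDist_le_dist_of_mem hy.2
    rw [abs_sub_comm] at h1
    linarith
end

section
/- Let r ≥ 0, let I ⊆ ℝ be a nonempty interval (an order-connected set of reals), and let f : ℝ → ℝ be strictly monotone (strictly increasing or strictly decreasing) on I. If every gap of the image f(I) has length less than r, then f is r-continuous inside I. -/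
/-- Every gap of `S` has length less than `r`: whenever `c < d`, the open
interval `(c, d)` misses `S`, and `S` has points `≤ c` and `≥ d`, then
`d - c < r`. -/
def GapsLT (r : ℝ) (S : Set ℝ) : Prop :=
  ∀ c d : ℝ, c < d → Set.Ioo c d ∩ S = ∅ →
    (∃ p ∈ S, p ≤ c) → (∃ p' ∈ S, d ≤ p') → d - c < r

lemma gapsLT_neg {r : ℝ} {S : Set ℝ} (h : GapsLT r S) :
    GapsLT r ((fun x => -x) '' S) := by
  rintro c d hcd hemp ⟨p, ⟨s, hs, rfl⟩, hpc⟩ ⟨p', ⟨s', hs', rfl⟩, hdp'⟩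
  simp only at hpc hdp'
  have := h (-d) (-c) (by linarith) ?_ ⟨s', hs', by linarith⟩ ⟨s, hs, by linarith⟩
  · linarith
  · ext z
    simp only [Set.mem_inter_iff, Set.mem_Ioo, Set.mem_empty_iff_false, iff_false, not_and]
    rintro ⟨hz1, hz2⟩ hz
    have : -z ∈ Set.Ioo c d ∩ ((fun x => -x) '' S) :=
      ⟨⟨by linarith, by linarith⟩, z, hz, rfl⟩
    rw [hemp] at this
    exact this

lemma right_side (r : ℝ) (hr : 0 ≤ r) (I : Set ℝ) (hI : I.OrdConnected)
    (f : ℝ → ℝ) (hf : StrictMonoOn f I) (hgaps : GapsLT r (f '' I))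
    (p : ℝ) (hp : p ∈ I) (ε : ℝ) (hε : 0 < ε) :
    ∃ δ > 0, ∀ x ∈ I, p ≤ x → x - p < δ → f x - f p < r + ε := by
  by_cases h : ∃ y ∈ I, p < y ∧ f y < f p + r + ε
  · obtain ⟨y, hy, hpy, hfy⟩ := h
    refine ⟨y - p, by linarith, ?_⟩
    intro x hx hpx hxy
    rcases eq_or_lt_of_le hpx with h' | h'
    · rw [← h']; linarith
    · have := hf hx hy (by linarith)
      linarith
  · push_neg at h
    by_cases h2 : ∃ y ∈ I, p < y
    · obtain ⟨y, hy, hpy⟩ := h2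
      exfalso
      have := hgaps (f p) (f p + r + ε) (by linarith) ?_ ⟨f p, ⟨p, hp, rfl⟩, le_rfl⟩
          ⟨f y, ⟨y, hy, rfl⟩, h y hy hpy⟩
      · linarith
      · ext z
        simp only [Set.mem_inter_iff, Set.mem_Ioo, Set.mem_empty_iff_false, iff_false, not_and]
        rintro ⟨hz1, hz2⟩ ⟨x, hx, rfl⟩
        rcases le_or_gt x p with hxp | hxp
        · have := hf.monotoneOn hx hp hxp; linarith
        · have := h x hx hxp; linarith
    · push_neg at h2
      refine ⟨1, one_pos, fun x hx hpx _ => ?_⟩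
      have : x = p := le_antisymm (h2 x hx) hpx
      rw [this]; linarith

lemma left_side (r : ℝ) (hr : 0 ≤ r) (I : Set ℝ) (hI : I.OrdConnected)
    (f : ℝ → ℝ) (hf : StrictMonoOn f I) (hgaps : GapsLT r (f '' I))
    (p : ℝ) (hp : p ∈ I) (ε : ℝ) (hε : 0 < ε) :
    ∃ δ > 0, ∀ x ∈ I, x ≤ p → p - x < δ → f p - f x < r + ε := by
  by_cases h : ∃ y ∈ I, y < p ∧ f p - r - ε < f y
  · obtain ⟨y, hy, hpy, hfy⟩ := h
    refine ⟨p - y, by linarith, ?_⟩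
    intro x hx hpx hxy
    rcases eq_or_lt_of_le hpx with h' | h'
    · rw [h']; linarith
    · have := hf hy hx (by linarith)
      linarith
  · push_neg at h
    by_cases h2 : ∃ y ∈ I, y < p
    · obtain ⟨y, hy, hpy⟩ := h2
      exfalso
      have := hgaps (f p - r - ε) (f p) (by linarith) ?_ ⟨f y, ⟨y, hy, rfl⟩, h y hy hpy⟩
          ⟨f p, ⟨p, hp, rfl⟩, le_rfl⟩
      · linarith
      · ext z
        simp only [Set.mem_inter_iff, Set.mem_Ioo, Set.mem_empty_iff_false, iff_false, not_and]
        rintro ⟨hz1, hz2⟩ ⟨x, hx, rfl⟩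
        rcases le_or_gt p x with hxp | hxp
        · have := hf.monotoneOn hp hx hxp; linarith
        · have := h x hx hxp; linarith
    · push_neg at h2
      refine ⟨1, one_pos, fun x hx hpx _ => ?_⟩
      have : x = p := le_antisymm hpx (h2 x hx)
      rw [this]; linarith

lemma mono_case (r : ℝ) (hr : 0 ≤ r) (I : Set ℝ) (hI : I.OrdConnected)
    (f : ℝ → ℝ) (hf : StrictMonoOn f I) (hgaps : GapsLT r (f '' I)) :
    RContinuousInside r f I := by
  intro p hp ε hε
  obtain ⟨δ₁, hδ₁, H₁⟩ := right_side r hr I hI f hf hgaps p hp ε hε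
  obtain ⟨δ₂, hδ₂, H₂⟩ := left_side r hr I hI f hf hgaps p hp ε hε
  refine ⟨min δ₁ δ₂, lt_min hδ₁ hδ₂, fun x hx hxd => ?_⟩
  have hm1 : min δ₁ δ₂ ≤ δ₁ := min_le_left _ _
  have hm2 : min δ₁ δ₂ ≤ δ₂ := min_le_right _ _
  rw [abs_lt] at hxd
  rcases le_or_gt p x with hpx | hpx
  · have h1 : f p ≤ f x := hf.monotoneOn hp hx hpx
    have := H₁ x hx hpx (by linarith [hxd.2])
    rw [abs_of_nonneg (by linarith)]; linarith
  · have h1 : f x ≤ f p := hf.monotoneOn hx hp hpx.le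
    have := H₂ x hx hpx.le (by linarith [hxd.1])
    rw [abs_of_nonpos (by linarith)]; linarith

/-- If every gap of the image of a nonempty interval `I` under a strictly
monotone function `f` has length less than `r`, then `f` is `r`-continuous
inside `I`. -/
theorem rContinuous_of_gaps_lt (r : ℝ) (hr : 0 ≤ r)
    (I : Set ℝ) (hne : I.Nonempty) (hI : I.OrdConnected)
    (f : ℝ → ℝ) (hmono : StrictMonoOn f I ∨ StrictAntiOn f I)
    (hgaps : GapsLT r (f '' I)) :
    RContinuousInside r f I := by
  rcases hmono with hf | hf
  · exact mono_case r hr I hI f hf hgaps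
  · have hg : StrictMonoOn (fun x => -f x) I := fun a ha b hb hab => by
      simpa using hf ha hb hab
    have himg : (fun x => -f x) '' I = (fun x => -x) '' (f '' I) := by
      rw [Set.image_image]
    have h := mono_case r hr I hI (fun x => -f x) hg (himg ▸ gapsLT_neg hgaps)
    intro p hp ε hε
    obtain ⟨δ, hδ, H⟩ := h p hp ε hε
    refine ⟨δ, hδ, fun x hx hxd => ?_⟩
    have := H x hx hxd
    rwa [show -f x - -f p = -(f x - f p) by ring, abs_neg] at this
end

section
/- Let X ⊆ ℝ be discrete in ℝ and let q ≥ 0. If there exists s > q such that any two adjacent points of X are at distance at least s (in particular, if X is bounded down and q is less than the lower inner bound of X), then every function f : ℝ → ℝ is (q, r)-continuous inside X for every r ≥ 0. -/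
/-- If adjacent points of a discrete set `X` are at distance at least `s > q`,
then every function is `(q, r)`-continuous inside `X`, for every `r ≥ 0`. -/
theorem qrContinuous_of_separated (X : Set ℝ) (hX : DiscreteInR X)
    (q : ℝ) (hq : 0 ≤ q)
    (hs : ∃ s > q, ∀ u v : ℝ, Adjacent X u v → s ≤ v - u) :
    ∀ r : ℝ, 0 ≤ r → ∀ f : ℝ → ℝ, QRContinuousInside q r f X := by
  obtain ⟨s, hsq, hsep⟩ := hs
  -- X ∩ [a,b] is finite
  have hfin : ∀ a b : ℝ, (X ∩ Set.Icc a b).Finite := by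
    intro a b
    by_contra hinf
    replace hinf : (X ∩ Set.Icc a b).Infinite := hinf
    have e := hinf.natEmbedding
    have hcomp : IsCompact (Set.Icc a b) := isCompact_Icc
    have hmem : ∀ n, (e n : ℝ) ∈ Set.Icc a b := fun n => (e n).2.2
    obtain ⟨c, _, φ, hφ, hlim⟩ := hcomp.tendsto_subseq hmem
    exact hX ⟨fun n => e (φ n), c, fun n => (e (φ n)).2.1,
      fun m n h => hφ.injective (e.injective (Subtype.ext h)), hlim⟩
  -- any two distinct points of X are at distance ≥ s
  have hkey : ∀ u v : ℝ, u ∈ X → v ∈ X → u < v → s ≤ v - u := by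
    intro u v hu hv huv
    by_contra hlt
    push_neg at hlt
    set T : Set ℝ := (X ∩ Set.Icc u v) \ {u} with hT
    have hTfin : T.Finite := ((hfin u v).subset Set.diff_subset)
    have hvT : v ∈ T := ⟨⟨hv, le_of_lt huv, le_refl v⟩, fun h => (ne_of_gt huv) h⟩
    obtain ⟨w, hwT, hwmin⟩ := Set.exists_min_image T id hTfin ⟨v, hvT⟩
    have hwX : w ∈ X := hwT.1.1
    have huw : u < w := lt_of_le_of_ne hwT.1.2.1 (fun h => hwT.2 h.symm)
    have hadj : Adjacent X u w := by
      refine ⟨hu, hwX, huw, fun z hz ⟨h1, h2⟩ => ?_⟩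
      have hzT : z ∈ T := ⟨⟨hz, le_of_lt h1, le_trans (le_of_lt h2) hwT.1.2.2⟩,
        fun h => (ne_of_gt h1) h⟩
      exact absurd (hwmin z hzT) (not_le.mpr h2)
    have := hsep u w hadj
    have : s ≤ v - u := le_trans this (by linarith [hwT.1.2.2])
    linarith
  intro r hr f p hp ε hε
  refine ⟨s - q, by linarith, fun x hx hxd => ?_⟩
  rcases eq_or_ne x p with rfl | hne
  · simp; linarith
  · exfalso
    have : |x - p| < s := by linarith
    rcases lt_or_gt_of_ne hne with h | h
    · have hs2 := hkey x p hx hp h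
      have : s ≤ |x - p| := by rw [abs_sub_comm, abs_of_pos (by linarith : (0:ℝ) < p - x)]; exact hs2
      linarith
    · have := hkey p x hp hx h
      linarith [le_abs_self (x - p)]
end
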